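/- Let ρ(q^{-t}) = q^{t(r₁-r₂+t+1)} [n choose t, r₂-t, r₁-r₂+t, n-r₁-t]_q for t in I = {max(0,r₂-r₁) ≤ t ≤ min(r₂, n-r₁)} (and 0 otherwise). Then ∑_{t} ρ(q^{-t}) q^{-t} = [n choose r₁]_q [n choose r₂]_q. -/

import Mathlib

noncomputable def qPoch (q : ℚ) (k : ℕ) : ℚ := ∏ j ∈ Finset.range k, (1 - q ^ (j + 1))

noncomputable def qMultinom4 (q : ℚ) (n a b c d : ℕ) : ℚ :=
  qPoch q n / (qPoch q a * qPoch q b * qPoch q c * qPoch q d)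

/-!
Each summand factors as `[n, r₁]_q · q^{t(r₁+t-r₂)} [r₁, r₂-t]_q [n-r₁, t]_q`, and the
remaining sum is the q-Vandermonde identity for `[r₁ + (n - r₁), r₂]_q`, which follows from
the q-Pascal rule by induction on `r₁`; the index set `I` is exactly where its summands are
nonzero.
-/

open Finset

section qBinom

variable {R : Type*} [CommSemiring R] (q : R)

/-- The Gaussian binomial coefficient `[n, k]_q`. -/
def qBinom : ℕ → ℕ → R
  | _, 0 => 1
  | 0, _ + 1 => 0
  | n + 1, k + 1 => q ^ (k + 1) * qBinom n (k + 1) + qBinom n k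

@[simp] theorem qBinom_zero_right (n : ℕ) : qBinom q n 0 = 1 := by
  cases n <;> rfl

@[simp] theorem qBinom_zero_succ (k : ℕ) : qBinom q 0 (k + 1) = 0 := rfl

theorem qBinom_succ_succ (n k : ℕ) :
    qBinom q (n + 1) (k + 1) = q ^ (k + 1) * qBinom q n (k + 1) + qBinom q n k := rfl

theorem qBinom_eq_zero_of_lt : ∀ {n k : ℕ}, n < k → qBinom q n k = 0
  | 0, _ + 1, _ => rfl
  | n + 1, k + 1, h => by
    rw [qBinom_succ_succ, qBinom_eq_zero_of_lt (by omega), qBinom_eq_zero_of_lt (by omega),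
      mul_zero, add_zero]

@[simp] theorem qBinom_self : ∀ n : ℕ, qBinom q n n = 1
  | 0 => rfl
  | n + 1 => by
    rw [qBinom_succ_succ, qBinom_eq_zero_of_lt q n.lt_succ_self, qBinom_self n, mul_zero, zero_add]

theorem qBinom_vandermonde_term_succ (m n i j : ℕ) :
    q ^ (j * (m + 1 - (i + 1))) * qBinom q (m + 1) (i + 1) * qBinom q n j =
      q ^ (i + j + 1) * (q ^ (j * (m - (i + 1))) * qBinom q m (i + 1) * qBinom q n j) +
        q ^ (j * (m - i)) * qBinom q m i * qBinom q n j := by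
  rw [qBinom_succ_succ, Nat.add_sub_add_right]
  rcases lt_or_ge m (i + 1) with h | h
  · rw [qBinom_eq_zero_of_lt q h]
    ring
  · obtain ⟨c, rfl⟩ := Nat.exists_eq_add_of_le h
    rw [Nat.add_sub_cancel_left, show i + 1 + c - i = c + 1 by omega]
    ring

/-- The truncated `m - i` in the exponent is harmless: the term vanishes when `m < i`. -/
theorem qBinom_vandermonde (n : ℕ) : ∀ m k : ℕ,
    ∑ ij ∈ antidiagonal k, q ^ (ij.2 * (m - ij.1)) * qBinom q m ij.1 * qBinom q n ij.2 =
      qBinom q (m + n) k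
  | 0, 0 => by simp
  | 0, k + 1 => by simp [Nat.sum_antidiagonal_succ]
  | m + 1, 0 => by simp
  | m + 1, k + 1 => by
    have hterm : ∀ ij ∈ antidiagonal k,
        q ^ (ij.2 * (m + 1 - (ij.1 + 1))) * qBinom q (m + 1) (ij.1 + 1) * qBinom q n ij.2 =
          q ^ (k + 1) * (q ^ (ij.2 * (m - (ij.1 + 1))) * qBinom q m (ij.1 + 1) * qBinom q n ij.2) +
            q ^ (ij.2 * (m - ij.1)) * qBinom q m ij.1 * qBinom q n ij.2 := by
      rintro ⟨i, j⟩ hij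
      obtain rfl : i + j = k := mem_antidiagonal.mp hij
      exact qBinom_vandermonde_term_succ q m n i j
    rw [Nat.sum_antidiagonal_succ, sum_congr rfl hterm, sum_add_distrib, ← mul_sum,
      qBinom_vandermonde n m k, Nat.add_right_comm, qBinom_succ_succ,
      ← qBinom_vandermonde n m (k + 1), Nat.sum_antidiagonal_succ]
    simp only [Nat.sub_zero, qBinom_zero_right]
    ring

theorem qBinom_vandermonde_Icc (m n k : ℕ) :
    ∑ j ∈ Icc (k - m) (min k n), q ^ (j * (m + j - k)) * qBinom q m (k - j) * qBinom q n j =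
      qBinom q (m + n) k := by
  rw [← qBinom_vandermonde, ← Nat.sum_antidiagonal_swap, Nat.sum_antidiagonal_eq_sum_range_succ_mk]
  have hsub : Icc (k - m) (min k n) ⊆ range (k + 1) := fun j hj => by
    simp only [mem_Icc, mem_range] at hj ⊢
    omega
  rw [← sum_subset hsub]
  · refine sum_congr rfl fun j hj => ?_
    rw [mem_Icc] at hj
    simp only [Prod.swap_prod_mk, show m - (k - j) = m + j - k by omega]
  · intro j hj hj'
    simp only [mem_Icc, mem_range, not_and_or, not_le] at hj hj'
    simp only [Prod.swap_prod_mk]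
    rcases hj' with h | h
    · rw [qBinom_eq_zero_of_lt q (by omega : m < k - j), mul_zero, zero_mul]
    · rw [qBinom_eq_zero_of_lt q (by omega : n < j), mul_zero]

end qBinom

theorem qPoch_succ (q : ℚ) (k : ℕ) : qPoch q (k + 1) = qPoch q k * (1 - q ^ (k + 1)) :=
  prod_range_succ _ _

theorem qPoch_ne_zero {q : ℚ} (h0 : 0 ≤ q) (h1 : q ≠ 1) (k : ℕ) : qPoch q k ≠ 0 :=
  prod_ne_zero_iff.mpr fun j _ =>
    sub_ne_zero.mpr (Ne.symm ((pow_eq_one_iff_of_nonneg h0 j.succ_ne_zero).not.mpr h1))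

theorem qBinom_add_mul_qPoch (q : ℚ) :
    ∀ a b : ℕ, qBinom q (a + b) a * (qPoch q a * qPoch q b) = qPoch q (a + b)
  | 0, b => by simp [qPoch]
  | a + 1, 0 => by simp [qPoch]
  | a + 1, b + 1 => by
    have h1 := qBinom_add_mul_qPoch q (a + 1) b
    have h2 := qBinom_add_mul_qPoch q a (b + 1)
    rw [qPoch_succ q a] at h1
    rw [show a + (b + 1) = a + 1 + b by omega, qPoch_succ q b] at h2
    show qBinom q (a + 1 + b + 1) (a + 1) * _ = qPoch q (a + 1 + b + 1)
    rw [qBinom_succ_succ, qPoch_succ q (a + 1 + b), qPoch_succ q a, qPoch_succ q b]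
    linear_combination q ^ (a + 1) * (1 - q ^ (b + 1)) * h1 + (1 - q ^ (a + 1)) * h2

theorem qBinom_eq_div {q : ℚ} (h0 : 0 ≤ q) (h1 : q ≠ 1) {n k : ℕ} (hk : k ≤ n) :
    qBinom q n k = qPoch q n / (qPoch q k * qPoch q (n - k)) := by
  obtain ⟨b, rfl⟩ := Nat.exists_eq_add_of_le hk
  rw [Nat.add_sub_cancel_left,
    eq_div_iff (mul_ne_zero (qPoch_ne_zero h0 h1 _) (qPoch_ne_zero h0 h1 _))]
  exact qBinom_add_mul_qPoch q k b

theorem qMultinom4_eq_qBinom_mul {q : ℚ} (h0 : 0 ≤ q) (h1 : q ≠ 1) {n k a b c d : ℕ}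
    (hbc : b + c = k) (hn : k + a + d = n) :
    qMultinom4 q n a b c d = qBinom q n k * qBinom q k b * qBinom q (n - k) a := by
  subst hbc hn
  rw [qBinom_eq_div h0 h1 (by omega), qBinom_eq_div h0 h1 (by omega),
    qBinom_eq_div h0 h1 (by omega), show b + c + a + d - (b + c) = a + d by omega,
    Nat.add_sub_cancel_left, Nat.add_sub_cancel_left]
  unfold qMultinom4
  field_simp [qPoch_ne_zero h0 h1]

/-- Summing `ρ(q^{-t}) q^{-t}` with
`ρ(q^{-t}) = q^{t(r₁-r₂+t+1)} [n choose t, r₂-t, r₁-r₂+t, n-r₁-t]_q` over the index set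
`I = {max(0, r₂-r₁) ≤ t ≤ min(r₂, n-r₁)}` gives `[n choose r₁]_q [n choose r₂]_q`. -/
theorem rho_sum (q : ℚ) (hq : 1 < q) (n r₁ r₂ : ℕ) (hr₁ : r₁ ≤ n) (hr₂ : r₂ ≤ n) :
    ∑ t ∈ Finset.Icc (max 0 (r₂ - r₁)) (min r₂ (n - r₁)),
        q ^ ((t : ℤ) * ((r₁ : ℤ) - r₂ + t + 1)) *
          qMultinom4 q n t (r₂ - t) (r₁ + t - r₂) (n - r₁ - t) * q ^ (-(t : ℤ)) =
      (qPoch q n / (qPoch q r₁ * qPoch q (n - r₁))) *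
        (qPoch q n / (qPoch q r₂ * qPoch q (n - r₂))) := by
  have h0 : 0 ≤ q := by linarith
  have h1 : q ≠ 1 := hq.ne'
  have hterm : ∀ t ∈ Icc (r₂ - r₁) (min r₂ (n - r₁)),
      q ^ ((t : ℤ) * ((r₁ : ℤ) - r₂ + t + 1)) *
          qMultinom4 q n t (r₂ - t) (r₁ + t - r₂) (n - r₁ - t) * q ^ (-(t : ℤ)) =
        qBinom q n r₁ * (q ^ (t * (r₁ + t - r₂)) * qBinom q r₁ (r₂ - t) * qBinom q (n - r₁) t) := by
    intro t ht
    rw [mem_Icc] at ht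
    have hexp : (t : ℤ) * ((r₁ : ℤ) - r₂ + t + 1) + -t = ((t * (r₁ + t - r₂) : ℕ) : ℤ) := by
      push_cast [Nat.cast_sub (by omega : r₂ ≤ r₁ + t)]
      ring
    rw [qMultinom4_eq_qBinom_mul h0 h1 (by omega : r₂ - t + (r₁ + t - r₂) = r₁) (by omega),
      mul_right_comm, ← zpow_add₀ (by positivity), hexp, zpow_natCast]
    ring
  rw [max_eq_right (Nat.zero_le _), sum_congr rfl hterm, ← mul_sum, qBinom_vandermonde_Icc,
    Nat.add_sub_cancel' hr₁, qBinom_eq_div h0 h1 hr₁, qBinom_eq_div h0 h1 hr₂]
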